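/- Let 1/√2 < α < 1, β = √(1−α²), N ≥ 2, and P_fail = (α²−β²)^{N−1}. For the distilled assemblage Σ^dist, the x = 1 contribution to the singlet-assemblage fraction equals Σ_{a∈{0,1}} F(σ^dist_{a|1}, σ^{Φ+}_{a|1}) = √(1 − ½P_fail(α−β)²). -/

import Mathlib

open Matrix Finset
open scoped ComplexOrder

/-- Positive-semidefinite square root of a matrix (defined as `0` if the matrix
is not positive semidefinite). -/
noncomputable def matSqrt {d : ℕ} (A : Matrix (Fin d) (Fin d) ℂ) :
    Matrix (Fin d) (Fin d) ℂ :=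
  open Classical in
  if h : A.PosSemidef then
    (h.1.eigenvectorUnitary : Matrix (Fin d) (Fin d) ℂ) *
      diagonal ((↑) ∘ (Real.sqrt ·) ∘ h.1.eigenvalues) *
      (star h.1.eigenvectorUnitary : Matrix (Fin d) (Fin d) ℂ)
  else 0

/-- Fidelity between positive semidefinite matrices: `F(A,B) = Tr[√(√A · B · √A)]`. -/
noncomputable def mFid {d : ℕ} (A B : Matrix (Fin d) (Fin d) ℂ) : ℝ :=
  (matSqrt (matSqrt A * B * matSqrt A)).trace.re

/-- The standard basis vector `|0⟩` of `ℂ²`. -/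
def e0 : Fin 2 → ℂ := ![1, 0]

/-- The standard basis vector `|1⟩` of `ℂ²`. -/
def e1 : Fin 2 → ℂ := ![0, 1]

/-- The projector `|0⟩⟨0|`. -/
def P00 : Matrix (Fin 2) (Fin 2) ℂ := vecMulVec e0 (star e0)

/-- The projector `|1⟩⟨1|`. -/
def P11 : Matrix (Fin 2) (Fin 2) ℂ := vecMulVec e1 (star e1)

/-- The Kraus operator `K⁰ = (β/α)|0⟩⟨0| + |1⟩⟨1|` of the successful filter outcome. -/
noncomputable def K0 (α β : ℝ) : Matrix (Fin 2) (Fin 2) ℂ :=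
  ((β / α : ℝ) : ℂ) • P00 + P11

/-- The Kraus operator `K¹ = (√(α²−β²)/α)|0⟩⟨0|` of the failed filter outcome. -/
noncomputable def K1 (α β : ℝ) : Matrix (Fin 2) (Fin 2) ℂ :=
  ((Real.sqrt (α ^ 2 - β ^ 2) / α : ℝ) : ℂ) • P00

/-- Bob's reduced state `ρ_B = α²|0⟩⟨0| + β²|1⟩⟨1|` of the assemblage `Σ^(α)`. -/
noncomputable def ρB (α β : ℝ) : Matrix (Fin 2) (Fin 2) ℂ :=
  ((α ^ 2 : ℝ) : ℂ) • P00 + ((β ^ 2 : ℝ) : ℂ) • P11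

/-- The vector `|α₊⟩ = α|0⟩ + β|1⟩`. -/
def ketαp (α β : ℝ) : Fin 2 → ℂ := ![(α : ℂ), (β : ℂ)]

/-- The vector `|α₋⟩ = α|0⟩ − β|1⟩`. -/
def ketαm (α β : ℝ) : Fin 2 → ℂ := ![(α : ℂ), -(β : ℂ)]

/-- The vector `|+⟩ = (|0⟩+|1⟩)/√2`. -/
noncomputable def ketp : Fin 2 → ℂ :=
  ![(1 / Real.sqrt 2 : ℝ), (1 / Real.sqrt 2 : ℝ)]

/-- The vector `|−⟩ = (|0⟩−|1⟩)/√2`. -/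
noncomputable def ketm : Fin 2 → ℂ :=
  ![(1 / Real.sqrt 2 : ℝ), (-(1 / Real.sqrt 2) : ℝ)]

/-- The assemblage `Σ^(α)` with components `σ^(α)_{a|x}` (first index `a`, second `x`):
`σ^(α)_{0|0} = α²|0⟩⟨0|`, `σ^(α)_{1|0} = β²|1⟩⟨1|`,
`σ^(α)_{0|1} = ½|α₊⟩⟨α₊|`, `σ^(α)_{1|1} = ½|α₋⟩⟨α₋|`. -/
noncomputable def σα (α β : ℝ) (a x : Fin 2) : Matrix (Fin 2) (Fin 2) ℂ :=
  if x = 0 then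
    if a = 0 then ((α ^ 2 : ℝ) : ℂ) • P00 else ((β ^ 2 : ℝ) : ℂ) • P11
  else
    if a = 0 then (1 / 2 : ℂ) • vecMulVec (ketαp α β) (star (ketαp α β))
    else (1 / 2 : ℂ) • vecMulVec (ketαm α β) (star (ketαm α β))

/-- The singlet assemblage `Σ^{Φ⁺}` with components
`σ^{Φ⁺}_{0|0} = ½|0⟩⟨0|`, `σ^{Φ⁺}_{1|0} = ½|1⟩⟨1|`,
`σ^{Φ⁺}_{0|1} = ½|+⟩⟨+|`, `σ^{Φ⁺}_{1|1} = ½|−⟩⟨−|`. -/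
noncomputable def σΦ (a x : Fin 2) : Matrix (Fin 2) (Fin 2) ℂ :=
  if x = 0 then
    if a = 0 then (1 / 2 : ℂ) • P00 else (1 / 2 : ℂ) • P11
  else
    if a = 0 then (1 / 2 : ℂ) • vecMulVec ketp (star ketp)
    else (1 / 2 : ℂ) • vecMulVec ketm (star ketm)

/-- The distilled assemblage `Σ^dist` obtained on average from the `N`-copy protocol,
with `P_fail = (α²−β²)^{N−1}` and `P_success = 1 − P_fail`:
`σ^dist_{0|0} = (½P_success + α²P_fail)|0⟩⟨0|`,
`σ^dist_{1|0} = (½P_success + β²P_fail)|1⟩⟨1|`,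
`σ^dist_{0|1} = ½(P_success|+⟩⟨+| + P_fail|α₊⟩⟨α₊|)`,
`σ^dist_{1|1} = ½(P_success|−⟩⟨−| + P_fail|α₋⟩⟨α₋|)`. -/
noncomputable def σdist (α β : ℝ) (N : ℕ) (a x : Fin 2) : Matrix (Fin 2) (Fin 2) ℂ :=
  let Pfail : ℝ := (α ^ 2 - β ^ 2) ^ (N - 1)
  let Psuccess : ℝ := 1 - Pfail
  if x = 0 then
    if a = 0 then ((1 / 2 * Psuccess + α ^ 2 * Pfail : ℝ) : ℂ) • P00
    else ((1 / 2 * Psuccess + β ^ 2 * Pfail : ℝ) : ℂ) • P11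
  else
    if a = 0 then
      (1 / 2 : ℂ) • (((Psuccess : ℝ) : ℂ) • vecMulVec ketp (star ketp) +
        ((Pfail : ℝ) : ℂ) • vecMulVec (ketαp α β) (star (ketαp α β)))
    else
      (1 / 2 : ℂ) • (((Psuccess : ℝ) : ℂ) • vecMulVec ketm (star ketm) +
        ((Pfail : ℝ) : ℂ) • vecMulVec (ketαm α β) (star (ketαm α β)))

/-! For `A ⪰ 0` and `c ≥ 0`, the matrix `√A (c|v⟩⟨v|) √A` is the rank-one `|w⟩⟨w|` with
`w = √c · √A v`, and `√(|w⟩⟨w|) = |w⟩⟨w| / ‖w‖`; hence `F(A, c|v⟩⟨v|) = √(c ⟨v|A|v⟩)`.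
Both `σ^{Φ⁺}_{a|1}` are pure, and `⟨±|σ^dist_{a|1}|±⟩ = ½(P_success + P_fail (α+β)²/2)`, so the
sum of the two fidelities is `√(1 − P_fail + P_fail (α+β)²/2)`, which is the claim because
`(α+β)² + (α−β)² = 2(α² + β²) = 2`. -/

section Fidelity

variable {d : ℕ}

open scoped MatrixOrder

lemma matSqrt_eq_cfcSqrt {A : Matrix (Fin d) (Fin d) ℂ} (hA : A.PosSemidef) :
    matSqrt A = CFC.sqrt A := by
  rw [matSqrt, dif_pos hA, CFC.sqrt_eq_cfc, cfc_nnreal_eq_real _ A, hA.1.cfc_eq]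
  simp only [IsHermitian.cfc, Unitary.conjStarAlgAut_apply]
  congr 3
  funext x
  simp [Real.coe_sqrt, max_eq_left (hA.eigenvalues_nonneg x)]

lemma posSemidef_matSqrt {A : Matrix (Fin d) (Fin d) ℂ} (hA : A.PosSemidef) :
    (matSqrt A).PosSemidef := by
  rw [matSqrt_eq_cfcSqrt hA]
  exact (CFC.sqrt_nonneg A).posSemidef

lemma matSqrt_mul_self {A : Matrix (Fin d) (Fin d) ℂ} (hA : A.PosSemidef) :
    matSqrt A * matSqrt A = A := by
  rw [matSqrt_eq_cfcSqrt hA]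
  exact CFC.sqrt_mul_sqrt_self A hA.nonneg

lemma matSqrt_eq_of_mul_self {A S : Matrix (Fin d) (Fin d) ℂ} (hS : S.PosSemidef)
    (h : S * S = A) : matSqrt A = S := by
  have hA : A.PosSemidef := by
    rw [← h]
    nth_rewrite 1 [← hS.1]
    exact posSemidef_conjTranspose_mul_self S
  rw [matSqrt_eq_cfcSqrt hA]
  exact (CFC.sqrt_eq_iff A S hA.nonneg hS.nonneg).mpr h

lemma star_dotProduct_self_eq_re (w : Fin d → ℂ) :
    star w ⬝ᵥ w = ((star w ⬝ᵥ w).re : ℂ) :=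
  Complex.eq_re_of_ofReal_le (r := 0) (by simp)

lemma re_star_dotProduct_self_nonneg {w : Fin d → ℂ} : 0 ≤ (star w ⬝ᵥ w).re :=
  (Complex.nonneg_iff.mp (dotProduct_star_self_nonneg w)).1

lemma matSqrt_vecMulVec_star (w : Fin d → ℂ) :
    matSqrt (vecMulVec w (star w)) =
      (((√(star w ⬝ᵥ w).re)⁻¹ : ℝ) : ℂ) • vecMulVec w (star w) := by
  rcases eq_or_ne w 0 with rfl | hw
  · exact matSqrt_eq_of_mul_self (by simpa using PosSemidef.zero) (by simp)
  set r := √(star w ⬝ᵥ w).re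
  have hr : r ≠ 0 := by
    rw [Ne, Real.sqrt_eq_zero re_star_dotProduct_self_nonneg, ← Complex.ofReal_eq_zero,
      ← star_dotProduct_self_eq_re]
    exact dotProduct_star_self_eq_zero.not.mpr hw
  refine matSqrt_eq_of_mul_self ((posSemidef_vecMulVec_self_star w).smul ?_) ?_
  · exact_mod_cast inv_nonneg.mpr (Real.sqrt_nonneg _)
  · rw [smul_mul_smul_comm, vecMulVec_mul_vecMulVec, star_dotProduct_self_eq_re]
    have hr2 : ((star w ⬝ᵥ w).re : ℂ) = (r : ℂ) ^ 2 := by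
      rw [← Complex.ofReal_pow, Real.sq_sqrt re_star_dotProduct_self_nonneg]
    rw [hr2, vecMulVec_smul, smul_smul]
    convert one_smul ℂ (vecMulVec w (star w))
    push_cast
    field_simp

lemma trace_matSqrt_vecMulVec_star (w : Fin d → ℂ) :
    (matSqrt (vecMulVec w (star w))).trace.re = √(star w ⬝ᵥ w).re := by
  rw [matSqrt_vecMulVec_star, trace_smul, trace_vecMulVec, dotProduct_comm w,
    smul_eq_mul, Complex.re_ofReal_mul, inv_mul_eq_div, Real.div_sqrt]

lemma mFid_vecMulVec_star {A : Matrix (Fin d) (Fin d) ℂ} (hA : A.PosSemidef) (v : Fin d → ℂ) :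
    mFid A (vecMulVec v (star v)) = √(star v ⬝ᵥ A *ᵥ v).re := by
  set S := matSqrt A
  have hstar : star (S *ᵥ v) = star v ᵥ* S := by rw [star_mulVec, (posSemidef_matSqrt hA).1]
  have hconj : S * vecMulVec v (star v) * S = vecMulVec (S *ᵥ v) (star (S *ᵥ v)) := by
    rw [mul_vecMulVec, vecMulVec_mul, hstar]
  rw [mFid, hconj, trace_matSqrt_vecMulVec_star, hstar, ← dotProduct_mulVec, mulVec_mulVec,
    matSqrt_mul_self hA]

lemma mFid_smul_vecMulVec_star {A : Matrix (Fin d) (Fin d) ℂ} (hA : A.PosSemidef)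
    {c : ℝ} (hc : 0 ≤ c) (v : Fin d → ℂ) :
    mFid A ((c : ℂ) • vecMulVec v (star v)) = √(c * (star v ⬝ᵥ A *ᵥ v).re) := by
  have hsc : ((√c : ℝ) : ℂ) * (√c : ℝ) = c := by exact_mod_cast Real.mul_self_sqrt hc
  have hrescale : (c : ℂ) • vecMulVec v (star v) =
      vecMulVec ((√c : ℂ) • v) (star ((√c : ℂ) • v)) := by
    rw [star_smul, Complex.star_def, Complex.conj_ofReal, smul_vecMulVec, vecMulVec_smul,
      smul_smul, hsc]
  rw [hrescale, mFid_vecMulVec_star hA, mulVec_smul, star_smul, Complex.star_def,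
    Complex.conj_ofReal, smul_dotProduct, dotProduct_smul, smul_smul, hsc, smul_eq_mul,
    Complex.re_ofReal_mul]

lemma star_dotProduct_vecMulVec_star_mulVec (u v : Fin d → ℂ) :
    star u ⬝ᵥ vecMulVec v (star v) *ᵥ u = (Complex.normSq (star u ⬝ᵥ v) : ℂ) := by
  rw [vecMulVec_mulVec, op_smul_eq_smul, dotProduct_smul, star_dotProduct, smul_eq_mul,
    Complex.star_def, Complex.normSq_eq_conj_mul_self]

lemma mFid_half_mixture_half_pure {u φ : Fin d → ℂ} (hu : star u ⬝ᵥ u = 1)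
    {p : ℝ} (hp0 : 0 ≤ p) (hp1 : p ≤ 1) :
    mFid ((1 / 2 : ℂ) • (((1 - p : ℝ) : ℂ) • vecMulVec u (star u) +
        ((p : ℝ) : ℂ) • vecMulVec φ (star φ))) ((1 / 2 : ℂ) • vecMulVec u (star u)) =
      √(1 - p + p * Complex.normSq (star u ⬝ᵥ φ)) / 2 := by
  have hhalf : (1 / 2 : ℂ) = ((1 / 2 : ℝ) : ℂ) := by norm_num
  rw [hhalf]
  have hpsd : (((1 / 2 : ℝ) : ℂ) • (((1 - p : ℝ) : ℂ) • vecMulVec u (star u) +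
      ((p : ℝ) : ℂ) • vecMulVec φ (star φ))).PosSemidef := by
    refine PosSemidef.smul (PosSemidef.add ?_ ?_) (Complex.zero_le_real.mpr (by norm_num))
    · exact (posSemidef_vecMulVec_self_star u).smul (Complex.zero_le_real.mpr (by linarith))
    · exact (posSemidef_vecMulVec_self_star φ).smul (Complex.zero_le_real.mpr hp0)
  rw [mFid_smul_vecMulVec_star hpsd (by norm_num), smul_mulVec, add_mulVec,
    smul_mulVec, smul_mulVec, dotProduct_smul, dotProduct_add, dotProduct_smul, dotProduct_smul,
    star_dotProduct_vecMulVec_star_mulVec, star_dotProduct_vecMulVec_star_mulVec, hu]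
  have hre : 1 / 2 * (((1 / 2 : ℝ) : ℂ) •
      (((1 - p : ℝ) : ℂ) • ((Complex.normSq 1 : ℝ) : ℂ) +
        (p : ℂ) • ((Complex.normSq (star u ⬝ᵥ φ) : ℝ) : ℂ))).re =
      (1 - p + p * Complex.normSq (star u ⬝ᵥ φ)) / 2 ^ 2 := by
    simp only [Complex.normSq_one, Complex.ofReal_one, mul_one, smul_eq_mul,
      Complex.re_ofReal_mul, Complex.add_re, Complex.ofReal_re]
    ring
  rw [hre, Real.sqrt_div' _ (by norm_num), Real.sqrt_sq two_pos.le]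

end Fidelity

section Qubit

variable (α β : ℝ)

lemma star_ketp_dotProduct_ketp : star ketp ⬝ᵥ ketp = 1 := by
  simp only [ketp, dotProduct, Fin.sum_univ_two, Pi.star_apply, cons_val_zero, cons_val_one,
    Complex.star_def, Complex.conj_ofReal]
  norm_cast
  field_simp
  norm_num

lemma star_ketm_dotProduct_ketm : star ketm ⬝ᵥ ketm = 1 := by
  simp only [ketm, dotProduct, Fin.sum_univ_two, Pi.star_apply, cons_val_zero, cons_val_one,
    Complex.star_def, Complex.conj_ofReal]
  norm_cast
  field_simp
  norm_num

lemma normSq_star_ketp_dotProduct_ketαp :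
    Complex.normSq (star ketp ⬝ᵥ ketαp α β) = (α + β) ^ 2 / 2 := by
  simp only [ketp, ketαp, dotProduct, Fin.sum_univ_two, Pi.star_apply, cons_val_zero,
    cons_val_one, Complex.star_def, Complex.conj_ofReal]
  norm_cast
  rw [Complex.normSq_ofReal]
  field_simp
  norm_num
  ring

lemma normSq_star_ketm_dotProduct_ketαm :
    Complex.normSq (star ketm ⬝ᵥ ketαm α β) = (α + β) ^ 2 / 2 := by
  simp only [ketm, ketαm, dotProduct, Fin.sum_univ_two, Pi.star_apply, cons_val_zero,
    cons_val_one, Complex.star_def, Complex.conj_ofReal]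
  norm_cast
  rw [Complex.normSq_ofReal]
  field_simp
  norm_num
  ring

lemma mFid_σdist_σΦ_one (N : ℕ) (h0 : 0 ≤ α ^ 2 - β ^ 2) (h1 : α ^ 2 - β ^ 2 ≤ 1)
    (a : Fin 2) :
    mFid (σdist α β N a 1) (σΦ a 1) =
      √(1 - (α ^ 2 - β ^ 2) ^ (N - 1) +
        (α ^ 2 - β ^ 2) ^ (N - 1) * ((α + β) ^ 2 / 2)) / 2 := by
  have hp0 : 0 ≤ (α ^ 2 - β ^ 2) ^ (N - 1) := pow_nonneg h0 _
  have hp1 : (α ^ 2 - β ^ 2) ^ (N - 1) ≤ 1 := pow_le_one₀ h0 h1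
  fin_cases a
  · rw [← normSq_star_ketp_dotProduct_ketαp α β]
    exact mFid_half_mixture_half_pure star_ketp_dotProduct_ketp hp0 hp1
  · rw [← normSq_star_ketm_dotProduct_ketαm α β]
    exact mFid_half_mixture_half_pure star_ketm_dotProduct_ketm hp0 hp1

end Qubit

theorem distilled_fraction_x1_general (α β : ℝ) (hα2 : 1 / Real.sqrt 2 < α) (hα : α < 1)
    (hβ : β = Real.sqrt (1 - α ^ 2)) (N : ℕ) :
    ∑ a, mFid (σdist α β N a 1) (σΦ a 1) =
      Real.sqrt (1 - 1 / 2 * (α ^ 2 - β ^ 2) ^ (N - 1) * (α - β) ^ 2) := by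
  have hα_sq : 1 / 2 < α ^ 2 := by
    have := pow_lt_pow_left₀ hα2 (by positivity) two_ne_zero
    rwa [div_pow, Real.sq_sqrt zero_le_two, one_pow] at this
  have hα_pos : 0 < α := lt_trans (by positivity) hα2
  have hβ_sq : β ^ 2 = 1 - α ^ 2 := by rw [hβ, Real.sq_sqrt (by nlinarith)]
  have h0 : 0 ≤ α ^ 2 - β ^ 2 := by linarith
  have h1 : α ^ 2 - β ^ 2 ≤ 1 := by nlinarith
  rw [Fin.sum_univ_two, mFid_σdist_σΦ_one α β N h0 h1, mFid_σdist_σΦ_one α β N h0 h1,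
    add_halves]
  congr 1
  linear_combination (α ^ 2 - β ^ 2) ^ (N - 1) * hβ_sq

/-- The `x = 1` contribution to the singlet-assemblage fraction of the
distilled assemblage equals `√(1 − ½P_fail(α−β)²)`. -/
theorem distilled_fraction_x1 (α β : ℝ) (hα2 : 1 / Real.sqrt 2 < α) (hα : α < 1)
    (hβ : β = Real.sqrt (1 - α ^ 2)) (N : ℕ) (hN : 2 ≤ N) :
    ∑ a, mFid (σdist α β N a 1) (σΦ a 1) =
      Real.sqrt (1 - 1 / 2 * (α ^ 2 - β ^ 2) ^ (N - 1) * (α - β) ^ 2) :=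
  distilled_fraction_x1_general α β hα2 hα hβ N
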